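/- Let M be an algebra with a distinguished character η: M → k and H a bialgebra, forming a right cocycle double cross coproduct pair with algebra maps ∇: M → H⊗M (x ↦ x₍₋₁₎⊗x₍₀₎), ▼: H → H⊗M (h ↦ h₍0̄₎⊗h₍1̄₎), δ: M → M⊗M (x ↦ x⁽¹⁾⊗x⁽²⁾), σ: H → M⊗M. Then the comultiplication Δ(x⊗h) = (x⁽¹⁾ h₍₁₎⁽¹⁾ ⊗ x⁽²⁾₍₋₁₎ h₍₁₎⁽²⁾₍₋₁₎ h₍₂₎₍0̄₎) ⊗ (x⁽²⁾₍₀₎ h₍₁₎⁽²⁾₍₀₎ h₍₂₎₍1̄₎ ⊗ h₍₃₎) on M⊗H with tensor product algebra structure, together with counit ε(x⊗h) = η(x)ε(h), is counital if and only if η(x⁽¹⁾)x⁽²⁾ = x = x⁽¹⁾η(x⁽²⁾) and η(h⁽¹⁾)h⁽²⁾ = ε(h)1 = h⁽¹⁾η(h⁽²⁾) for all x ∈ M, h ∈ H. -/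

import Mathlib

/-!
Apply `ε_G ⊗ id` (resp. `id ⊗ ε_G`) to `Δ(x ⊗ h)`. It factors through the algebra map
`a ⊗ (b ⊗ m) ↦ η(a)ε(b)m ⊗ 1` (resp. `↦ η(m) a ⊗ b`) on `M ⊗ (H ⊗ M)`, so it passes through the
products in `Δ`; the axioms on `∇` and `▼` then reduce `∇` to the identity and `▼` to the counit,
leaving `x ⊗ h ↦ Q(x⁽¹⁾ ⊗ x⁽²⁾) Q(σ(h₍₁₎)) ⊗ h₍₂₎` with `Q = η ⊗ id` (resp. `id ⊗ η`). Such a map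
is the identity iff `Q ∘ δ = id` and `Q ∘ σ = ε(·)1`: apply `id ⊗ ε` and evaluate at `x ⊗ 1` and
`1 ⊗ h`.
-/

open TensorProduct LinearMap

section

variable (k : Type*) [Field k] (M H : Type*)
  [Ring M] [Algebra k M] [Ring H] [Bialgebra k H]

/-- The comultiplication of the (right) cocycle double cross coproduct
`Δ(x⊗h) = (x⁽¹⁾h₍₁₎⁽¹⁾ ⊗ x⁽²⁾₍₋₁₎h₍₁₎⁽²⁾₍₋₁₎h₍₂₎₍0̄₎) ⊗ (x⁽²⁾₍₀₎h₍₁₎⁽²⁾₍₀₎h₍₂₎₍1̄₎ ⊗ h₍₃₎)`. -/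
noncomputable def cdccComul
    (nabla : M →ₐ[k] (H ⊗[k] M)) (bdown : H →ₐ[k] (H ⊗[k] M))
    (delta : M →ₐ[k] (M ⊗[k] M)) (sigma : H →ₐ[k] (M ⊗[k] M)) :
    (M ⊗[k] H) →ₗ[k] (M ⊗[k] H) ⊗[k] (M ⊗[k] H) :=
  -- product on the tensor algebra `H ⊗ M`
  letI mulHM : (H ⊗[k] M) ⊗[k] (H ⊗[k] M) →ₗ[k] H ⊗[k] M :=
    (TensorProduct.map (LinearMap.mul' k H) (LinearMap.mul' k M)) ∘ₗ
      (TensorProduct.tensorTensorTensorComm k H M H M).toLinearMap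
  -- `x ↦ x⁽¹⁾ ⊗ (x⁽²⁾₍₋₁₎ ⊗ x⁽²⁾₍₀₎)`
  letI A : M →ₗ[k] M ⊗[k] (H ⊗[k] M) :=
    (LinearMap.lTensor M nabla.toLinearMap) ∘ₗ delta.toLinearMap
  -- `h ↦ h₍₁₎ ⊗ (h₍₂₎ ⊗ h₍₃₎)`
  letI d3H : H →ₗ[k] H ⊗[k] (H ⊗[k] H) :=
    (LinearMap.lTensor H (Coalgebra.comul : H →ₗ[k] H ⊗[k] H)) ∘ₗ
      (Coalgebra.comul : H →ₗ[k] H ⊗[k] H)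
  -- `h ↦ (h₍₁₎⁽¹⁾ ⊗ (h₍₁₎⁽²⁾₍₋₁₎ ⊗ h₍₁₎⁽²⁾₍₀₎)) ⊗ ((h₍₂₎₍0̄₎ ⊗ h₍₂₎₍1̄₎) ⊗ h₍₃₎)`
  letI B : H →ₗ[k] (M ⊗[k] (H ⊗[k] M)) ⊗[k] ((H ⊗[k] M) ⊗[k] H) :=
    (TensorProduct.map
      ((LinearMap.lTensor M nabla.toLinearMap) ∘ₗ sigma.toLinearMap)
      (TensorProduct.map bdown.toLinearMap LinearMap.id)) ∘ₗ d3H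
  -- componentwise product on `M ⊗ (H ⊗ M)`
  letI C : (M ⊗[k] (H ⊗[k] M)) ⊗[k] (M ⊗[k] (H ⊗[k] M)) →ₗ[k] M ⊗[k] (H ⊗[k] M) :=
    (TensorProduct.map (LinearMap.mul' k M) mulHM) ∘ₗ
      (TensorProduct.tensorTensorTensorComm k M (H ⊗[k] M) M (H ⊗[k] M)).toLinearMap
  letI D : (M ⊗[k] (H ⊗[k] M)) ⊗[k] (H ⊗[k] M) →ₗ[k] M ⊗[k] (H ⊗[k] M) :=
    (LinearMap.lTensor M mulHM) ∘ₗ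
      (TensorProduct.assoc k M (H ⊗[k] M) (H ⊗[k] M)).toLinearMap
  -- final reshaping `(a ⊗ (b ⊗ c)) ⊗ h₃ ↦ (a ⊗ b) ⊗ (c ⊗ h₃)`
  letI reshape : (M ⊗[k] (H ⊗[k] M)) ⊗[k] H →ₗ[k] (M ⊗[k] H) ⊗[k] (M ⊗[k] H) :=
    (TensorProduct.assoc k (M ⊗[k] H) M H).toLinearMap ∘ₗ
      (LinearMap.rTensor H ((TensorProduct.assoc k M H M).symm.toLinearMap))
  reshape ∘ₗ
    (LinearMap.rTensor H D) ∘ₗ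
    (TensorProduct.assoc k (M ⊗[k] (H ⊗[k] M)) (H ⊗[k] M) H).symm.toLinearMap ∘ₗ
    (LinearMap.rTensor ((H ⊗[k] M) ⊗[k] H) C) ∘ₗ
    (TensorProduct.assoc k (M ⊗[k] (H ⊗[k] M)) (M ⊗[k] (H ⊗[k] M))
      ((H ⊗[k] M) ⊗[k] H)).symm.toLinearMap ∘ₗ
    (TensorProduct.map A B)

end

namespace Algebra.TensorProduct

variable {k A B : Type*} [CommSemiring k] [Semiring A] [Algebra k A] [Semiring B] [Algebra k B]

noncomputable def contractLeft (f : A →ₐ[k] k) : A ⊗[k] B →ₐ[k] B :=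
  (Algebra.TensorProduct.lid k B).toAlgHom.comp (Algebra.TensorProduct.map f (AlgHom.id k B))

noncomputable def contractRight (f : B →ₐ[k] k) : A ⊗[k] B →ₐ[k] A :=
  (Algebra.TensorProduct.rid k k A).toAlgHom.comp (Algebra.TensorProduct.map (AlgHom.id k A) f)

@[simp]
theorem contractLeft_tmul (f : A →ₐ[k] k) (a : A) (b : B) :
    contractLeft f (a ⊗ₜ[k] b) = f a • b := by
  simp [contractLeft]

@[simp]
theorem contractRight_tmul (f : B →ₐ[k] k) (a : A) (b : B) :
    contractRight f (a ⊗ₜ[k] b) = f b • a := by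
  simp [contractRight]

theorem toLinearMap_contractLeft (f : A →ₐ[k] k) :
    (contractLeft f).toLinearMap =
      (_root_.TensorProduct.lid k B).toLinearMap ∘ₗ LinearMap.rTensor B f.toLinearMap := by
  ext; simp

theorem toLinearMap_contractRight (f : B →ₐ[k] k) :
    (contractRight f).toLinearMap =
      (_root_.TensorProduct.rid k A).toLinearMap ∘ₗ LinearMap.lTensor A f.toLinearMap := by
  ext; simp

end Algebra.TensorProduct

open Algebra.TensorProduct (contractLeft contractRight toLinearMap_contractLeft
  toLinearMap_contractRight)

section Contract

variable {k M H : Type*} [CommSemiring k] [Semiring M] [Algebra k M] [Semiring H] [Bialgebra k H]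
  (delta : M →ₐ[k] M ⊗[k] M) (sigma : H →ₐ[k] M ⊗[k] M)

-- `x ⊗ h ↦ Q(x⁽¹⁾ ⊗ x⁽²⁾) Q(σ(h₍₁₎)) ⊗ h₍₂₎`
noncomputable def cdccContract (Q : M ⊗[k] M →ₐ[k] M) : M ⊗[k] H →ₗ[k] M ⊗[k] H :=
  rTensor H (mul' k M) ∘ₗ (TensorProduct.assoc k M M H).symm.toLinearMap ∘ₗ
    map (Q.toLinearMap ∘ₗ delta.toLinearMap) (rTensor H (Q.toLinearMap ∘ₗ sigma.toLinearMap)) ∘ₗ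
    lTensor M Coalgebra.comul

theorem rid_lTensor_counit_cdccContract_tmul (Q : M ⊗[k] M →ₐ[k] M) (x : M) (g : H) :
    TensorProduct.rid k M (lTensor M Coalgebra.counit (cdccContract delta sigma Q (x ⊗ₜ g))) =
      Q (delta x) * Q (sigma g) := by
  have key : (TensorProduct.rid k M).toLinearMap ∘ₗ lTensor M Coalgebra.counit ∘ₗ
      rTensor H (mul' k M) ∘ₗ (TensorProduct.assoc k M M H).symm.toLinearMap ∘ₗ
      map (Q.toLinearMap ∘ₗ delta.toLinearMap) (rTensor H (Q.toLinearMap ∘ₗ sigma.toLinearMap)) =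
      mul' k M ∘ₗ map (Q.toLinearMap ∘ₗ delta.toLinearMap) (Q.toLinearMap ∘ₗ sigma.toLinearMap ∘ₗ
        (TensorProduct.rid k H).toLinearMap ∘ₗ lTensor H Coalgebra.counit) := by
    ext x a c
    simp
  simpa [cdccContract] using congr($key (x ⊗ₜ[k] Coalgebra.comul (R := k) g))

theorem cdccContract_eq_id_iff (Q : M ⊗[k] M →ₐ[k] M) :
    cdccContract delta sigma Q = LinearMap.id ↔
      Q.toLinearMap ∘ₗ delta.toLinearMap = LinearMap.id ∧
      Q.toLinearMap ∘ₗ sigma.toLinearMap = Algebra.linearMap k M ∘ₗ Coalgebra.counit := by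
  constructor
  · intro h
    have h_tmul (x : M) (g : H) : Coalgebra.counit (R := k) g • x = Q (delta x) * Q (sigma g) := by
      simpa [h] using rid_lTensor_counit_cdccContract_tmul delta sigma Q x g
    refine ⟨LinearMap.ext fun x => ?_, LinearMap.ext fun g => ?_⟩
    · simpa using (h_tmul x 1).symm
    · simpa [Algebra.smul_def] using (h_tmul 1 g).symm
  · rintro ⟨hdelta, hsigma⟩
    have key : rTensor H (mul' k M) ∘ₗ (TensorProduct.assoc k M M H).symm.toLinearMap ∘ₗ
        map (Q.toLinearMap ∘ₗ delta.toLinearMap) (rTensor H (Q.toLinearMap ∘ₗ sigma.toLinearMap)) =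
        lTensor M ((TensorProduct.lid k H).toLinearMap ∘ₗ rTensor H Coalgebra.counit) := by
      rw [hdelta, hsigma]
      ext x a c
      simp [← Algebra.commutes, ← Algebra.smul_def, TensorProduct.smul_tmul]
    calc cdccContract delta sigma Q
        = lTensor M ((TensorProduct.lid k H).toLinearMap ∘ₗ rTensor H Coalgebra.counit) ∘ₗ
            lTensor M Coalgebra.comul := by rw [← key]; rfl
      _ = LinearMap.id := by
        rw [← lTensor_comp, LinearMap.comp_assoc, Coalgebra.rTensor_counit_comp_comul]
        ext; simp

end Contract

section

variable (k : Type*) [Field k] (M H : Type*)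
  [Ring M] [Algebra k M] [Ring H] [Bialgebra k H]

noncomputable def cdccReshape : (M ⊗[k] (H ⊗[k] M)) ⊗[k] H →ₗ[k] (M ⊗[k] H) ⊗[k] (M ⊗[k] H) :=
  (TensorProduct.assoc k (M ⊗[k] H) M H).toLinearMap ∘ₗ
    rTensor H (TensorProduct.assoc k M H M).symm.toLinearMap

-- `X ⊗ (Y ⊗ (w ⊗ c)) ↦ (X * Y * (1 ⊗ w)) ⊗ c`, the products taken in `M ⊗ (H ⊗ M)`
noncomputable def cdccMul :
    (M ⊗[k] (H ⊗[k] M)) ⊗[k] ((M ⊗[k] (H ⊗[k] M)) ⊗[k] ((H ⊗[k] M) ⊗[k] H)) →ₗ[k]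
      (M ⊗[k] (H ⊗[k] M)) ⊗[k] H :=
  rTensor H (mul' k (M ⊗[k] (H ⊗[k] M)) ∘ₗ map (mul' k (M ⊗[k] (H ⊗[k] M)))
      (Algebra.TensorProduct.includeRight : H ⊗[k] M →ₐ[k] M ⊗[k] (H ⊗[k] M)).toLinearMap) ∘ₗ
    (TensorProduct.assoc k _ _ H).symm.toLinearMap ∘ₗ (TensorProduct.assoc k _ _ _).symm.toLinearMap

section

variable {k M H}

theorem cdccComul_eq (nabla : M →ₐ[k] (H ⊗[k] M)) (bdown : H →ₐ[k] (H ⊗[k] M))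
    (delta : M →ₐ[k] (M ⊗[k] M)) (sigma : H →ₐ[k] (M ⊗[k] M)) :
    cdccComul k M H nabla bdown delta sigma =
      cdccReshape k M H ∘ₗ cdccMul k M H ∘ₗ
        map (lTensor M nabla.toLinearMap ∘ₗ delta.toLinearMap)
          (map (lTensor M nabla.toLinearMap ∘ₗ sigma.toLinearMap) (rTensor H bdown.toLinearMap)) ∘ₗ
        lTensor M (lTensor H Coalgebra.comul ∘ₗ Coalgebra.comul) := by
  rw [map_comp_lTensor]
  unfold cdccComul
  congr 1
  simp only [← LinearMap.comp_assoc]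
  congr 1
  ext
  simp [cdccMul]

-- `E` is one of the two counit maps; `hE` factors it through the multiplicative `Φ`.
theorem comp_cdccComul_eq_cdccContract (nabla : M →ₐ[k] (H ⊗[k] M))
    (bdown : H →ₐ[k] (H ⊗[k] M)) (delta : M →ₐ[k] (M ⊗[k] M)) (sigma : H →ₐ[k] (M ⊗[k] M))
    (E : (M ⊗[k] H) ⊗[k] (M ⊗[k] H) →ₗ[k] M ⊗[k] H)
    (Φ : M ⊗[k] (H ⊗[k] M) →ₐ[k] M ⊗[k] H) (ψ : H →ₗ[k] M ⊗[k] H)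
    (Q : M ⊗[k] M →ₐ[k] M) (φ : H ⊗[k] H →ₗ[k] H)
    (hE : ∀ a b m c, E ((a ⊗ₜ b) ⊗ₜ (m ⊗ₜ c)) = Φ (a ⊗ₜ (b ⊗ₜ m)) * ψ c)
    (hΦ : ∀ u, Φ (lTensor M nabla.toLinearMap u) = Q u ⊗ₜ 1)
    (hφ : ∀ b c, Φ (1 ⊗ₜ bdown b) * ψ c = 1 ⊗ₜ φ (b ⊗ₜ c))
    (hφ_comul : φ ∘ₗ Coalgebra.comul = LinearMap.id) :
    E ∘ₗ cdccComul k M H nabla bdown delta sigma = cdccContract delta sigma Q := by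
  have hreshape : E ∘ₗ cdccReshape k M H = mul' k (M ⊗[k] H) ∘ₗ map Φ.toLinearMap ψ := by
    ext a b m c
    simp [cdccReshape, hE]
  have hcore : E ∘ₗ cdccReshape k M H ∘ₗ cdccMul k M H ∘ₗ
        map (lTensor M nabla.toLinearMap ∘ₗ delta.toLinearMap)
          (map (lTensor M nabla.toLinearMap ∘ₗ sigma.toLinearMap) (rTensor H bdown.toLinearMap)) =
      rTensor H (mul' k M) ∘ₗ (TensorProduct.assoc k M M H).symm.toLinearMap ∘ₗ
        map (Q.toLinearMap ∘ₗ delta.toLinearMap) (rTensor H (Q.toLinearMap ∘ₗ sigma.toLinearMap)) ∘ₗ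
        lTensor M (lTensor H φ) := by
    rw [← LinearMap.comp_assoc, hreshape]
    ext x a b c
    simp [cdccMul, hΦ, mul_assoc, hφ]
  calc E ∘ₗ cdccComul k M H nabla bdown delta sigma
      = (rTensor H (mul' k M) ∘ₗ (TensorProduct.assoc k M M H).symm.toLinearMap ∘ₗ
          map (Q.toLinearMap ∘ₗ delta.toLinearMap) (rTensor H (Q.toLinearMap ∘ₗ sigma.toLinearMap)) ∘ₗ
          lTensor M (lTensor H φ)) ∘ₗ lTensor M (lTensor H Coalgebra.comul ∘ₗ Coalgebra.comul) := by
        rw [cdccComul_eq, ← hcore]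
        rfl
    _ = cdccContract delta sigma Q := by
        rw [LinearMap.comp_assoc, LinearMap.comp_assoc, LinearMap.comp_assoc, ← lTensor_comp,
          ← LinearMap.comp_assoc Coalgebra.comul, ← lTensor_comp, hφ_comul, lTensor_id,
          LinearMap.id_comp]
        rfl

theorem lid_comp_rTensor_counit_comp_cdccComul (eta : M →ₐ[k] k)
    (nabla : M →ₐ[k] (H ⊗[k] M)) (bdown : H →ₐ[k] (H ⊗[k] M))
    (delta : M →ₐ[k] (M ⊗[k] M)) (sigma : H →ₐ[k] (M ⊗[k] M))
    (h1 : (TensorProduct.lid k M).toLinearMap ∘ₗ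
        (LinearMap.rTensor M (Coalgebra.counit : H →ₗ[k] k)) ∘ₗ nabla.toLinearMap =
      LinearMap.id)
    (h4 : (TensorProduct.lid k M).toLinearMap ∘ₗ
        (LinearMap.rTensor M (Coalgebra.counit : H →ₗ[k] k)) ∘ₗ bdown.toLinearMap =
      (Algebra.linearMap k M) ∘ₗ (Coalgebra.counit : H →ₗ[k] k)) :
    (TensorProduct.lid k (M ⊗[k] H)).toLinearMap ∘ₗ
        rTensor (M ⊗[k] H)
          ((TensorProduct.lid k k).toLinearMap ∘ₗ map eta.toLinearMap Coalgebra.counit) ∘ₗ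
        cdccComul k M H nabla bdown delta sigma =
      cdccContract delta sigma (contractLeft eta) := by
  have counit_nabla (m : M) : contractLeft (Bialgebra.counitAlgHom k H) (nabla m) = m := by
    rw [← AlgHom.toLinearMap_apply, toLinearMap_contractLeft]
    exact congr($h1 m)
  have counit_bdown (b : H) :
      contractLeft (Bialgebra.counitAlgHom k H) (bdown b) = algebraMap k M (Coalgebra.counit b) := by
    rw [← AlgHom.toLinearMap_apply, toLinearMap_contractLeft]
    exact congr($h4 b)
  rw [← LinearMap.comp_assoc]
  refine comp_cdccComul_eq_cdccContract nabla bdown delta sigma _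
    (Algebra.TensorProduct.includeLeft.comp ((contractLeft eta).comp
      (Algebra.TensorProduct.map (AlgHom.id k M) (contractLeft (Bialgebra.counitAlgHom k H)))))
    (TensorProduct.mk k M H 1) _ ((TensorProduct.lid k H).toLinearMap ∘ₗ rTensor H Coalgebra.counit)
    ?_ ?_ ?_ ?_
  · intro a b m c
    simp [smul_smul, mul_comm]
  · intro u
    induction u using TensorProduct.induction_on with
    | zero => simp
    | tmul a m => simp [counit_nabla, smul_tmul']
    | add u v hu hv => rw [map_add, map_add, hu, hv, map_add, add_tmul]
  · intro b c
    simp [counit_bdown, Algebra.algebraMap_eq_smul_one, smul_tmul']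
  · rw [LinearMap.comp_assoc, Coalgebra.rTensor_counit_comp_comul]
    ext; simp

theorem rid_comp_lTensor_counit_comp_cdccComul (eta : M →ₐ[k] k)
    (nabla : M →ₐ[k] (H ⊗[k] M)) (bdown : H →ₐ[k] (H ⊗[k] M))
    (delta : M →ₐ[k] (M ⊗[k] M)) (sigma : H →ₐ[k] (M ⊗[k] M))
    (h2 : (TensorProduct.rid k H).toLinearMap ∘ₗ
        (LinearMap.lTensor H eta.toLinearMap) ∘ₗ bdown.toLinearMap =
      LinearMap.id)
    (h3 : (TensorProduct.rid k H).toLinearMap ∘ₗ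
        (LinearMap.lTensor H eta.toLinearMap) ∘ₗ nabla.toLinearMap =
      (Algebra.linearMap k H) ∘ₗ eta.toLinearMap) :
    (TensorProduct.rid k (M ⊗[k] H)).toLinearMap ∘ₗ
        lTensor (M ⊗[k] H)
          ((TensorProduct.lid k k).toLinearMap ∘ₗ map eta.toLinearMap Coalgebra.counit) ∘ₗ
        cdccComul k M H nabla bdown delta sigma =
      cdccContract delta sigma (contractRight eta) := by
  have eta_nabla (m : M) : contractRight (A := H) eta (nabla m) = algebraMap k H (eta m) := by
    rw [← AlgHom.toLinearMap_apply, toLinearMap_contractRight]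
    exact congr($h3 m)
  have eta_bdown (b : H) : contractRight (A := H) eta (bdown b) = b := by
    rw [← AlgHom.toLinearMap_apply, toLinearMap_contractRight]
    exact congr($h2 b)
  rw [← LinearMap.comp_assoc]
  refine comp_cdccComul_eq_cdccContract nabla bdown delta sigma _
    (Algebra.TensorProduct.map (AlgHom.id k M) (contractRight eta))
    (Algebra.linearMap k (M ⊗[k] H) ∘ₗ Coalgebra.counit) _
    ((TensorProduct.rid k H).toLinearMap ∘ₗ lTensor H Coalgebra.counit) ?_ ?_ ?_ ?_
  · intro a b m c
    simp [Algebra.algebraMap_eq_smul_one, smul_tmul', smul_smul, mul_comm]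
  · intro u
    induction u using TensorProduct.induction_on with
    | zero => simp
    | tmul a m => simp [eta_nabla, Algebra.algebraMap_eq_smul_one, smul_tmul']
    | add u v hu hv => rw [map_add, map_add, hu, hv, map_add, add_tmul]
  · intro b c
    simp [eta_bdown, Algebra.algebraMap_eq_smul_one, smul_tmul']
  · rw [LinearMap.comp_assoc, Coalgebra.lTensor_counit_comp_comul]
    ext; simp

end

theorem cocycle_double_cross_coproduct_counital_iff
    (eta : M →ₐ[k] k)
    (nabla : M →ₐ[k] (H ⊗[k] M)) (bdown : H →ₐ[k] (H ⊗[k] M))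
    (delta : M →ₐ[k] (M ⊗[k] M)) (sigma : H →ₐ[k] (M ⊗[k] M))
    -- `ε(x₍₋₁₎) x₍₀₎ = x`
    (h1 : (TensorProduct.lid k M).toLinearMap ∘ₗ
        (LinearMap.rTensor M (Coalgebra.counit : H →ₗ[k] k)) ∘ₗ nabla.toLinearMap =
      LinearMap.id)
    -- `h₍0̄₎ η(h₍1̄₎) = h`
    (h2 : (TensorProduct.rid k H).toLinearMap ∘ₗ
        (LinearMap.lTensor H eta.toLinearMap) ∘ₗ bdown.toLinearMap =
      LinearMap.id)
    -- `x₍₋₁₎ η(x₍₀₎) = η(x) 1`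
    (h3 : (TensorProduct.rid k H).toLinearMap ∘ₗ
        (LinearMap.lTensor H eta.toLinearMap) ∘ₗ nabla.toLinearMap =
      (Algebra.linearMap k H) ∘ₗ eta.toLinearMap)
    -- `ε(h₍0̄₎) h₍1̄₎ = ε(h) 1`
    (h4 : (TensorProduct.lid k M).toLinearMap ∘ₗ
        (LinearMap.rTensor M (Coalgebra.counit : H →ₗ[k] k)) ∘ₗ bdown.toLinearMap =
      (Algebra.linearMap k M) ∘ₗ (Coalgebra.counit : H →ₗ[k] k)) :
    -- the counit of the cocycle double cross coproduct
    letI epsG : (M ⊗[k] H) →ₗ[k] k :=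
      (TensorProduct.lid k k).toLinearMap ∘ₗ
        (TensorProduct.map eta.toLinearMap (Coalgebra.counit : H →ₗ[k] k))
    -- counitality iff the four conditions
    (((TensorProduct.lid k (M ⊗[k] H)).toLinearMap ∘ₗ
        (LinearMap.rTensor (M ⊗[k] H) epsG) ∘ₗ
        cdccComul k M H nabla bdown delta sigma = LinearMap.id) ∧
     ((TensorProduct.rid k (M ⊗[k] H)).toLinearMap ∘ₗ
        (LinearMap.lTensor (M ⊗[k] H) epsG) ∘ₗ
        cdccComul k M H nabla bdown delta sigma = LinearMap.id)) ↔
    (((TensorProduct.lid k M).toLinearMap ∘ₗ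
        (LinearMap.rTensor M eta.toLinearMap) ∘ₗ delta.toLinearMap =
          LinearMap.id) ∧
     ((TensorProduct.rid k M).toLinearMap ∘ₗ
        (LinearMap.lTensor M eta.toLinearMap) ∘ₗ delta.toLinearMap =
          LinearMap.id) ∧
     ((TensorProduct.lid k M).toLinearMap ∘ₗ
        (LinearMap.rTensor M eta.toLinearMap) ∘ₗ sigma.toLinearMap =
          (Algebra.linearMap k M) ∘ₗ (Coalgebra.counit : H →ₗ[k] k)) ∧
     ((TensorProduct.rid k M).toLinearMap ∘ₗ
        (LinearMap.lTensor M eta.toLinearMap) ∘ₗ sigma.toLinearMap =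
          (Algebra.linearMap k M) ∘ₗ (Coalgebra.counit : H →ₗ[k] k))) := by
  rw [lid_comp_rTensor_counit_comp_cdccComul eta nabla bdown delta sigma h1 h4,
    rid_comp_lTensor_counit_comp_cdccComul eta nabla bdown delta sigma h2 h3,
    cdccContract_eq_id_iff, cdccContract_eq_id_iff,
    toLinearMap_contractLeft, toLinearMap_contractRight]
  simp only [LinearMap.comp_assoc]
  tauto

end
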